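/- arXiv:2410.19400 — 5 statements merged into one kernel-verified Lean document; each statement's English description precedes it below -/
import Mathlib

section
/- In the deterministic tabular setting, the value-aware policy π* globally maximizes the regularizer R̄: for every policy π, R̄(π) ≤ R̄(π*), the inequality holding in the extended reals; moreover R̄(π*) is a real number (in particular R̄(π*) > −∞). -/
open scoped BigOperators Classical

/-- Extended-real logarithm of a (nonnegative) real number, with `elog 0 = ⊥` (i.e. `log 0 = -∞`).
Note that in `EReal` we have `0 * ⊥ = 0`, matching the convention `0·(−∞) = 0`. -/
noncomputable def elog (x : ℝ) : EReal := if x = 0 then ⊥ else ((Real.log x : ℝ) : EReal)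

/-- The regularizer
`R̄(π) = Σ_s d(s)·Σ_{s'} N(s'|s)·(exp(α V(s'))/Z(s))·log(Σ_a π(a|s)·𝟙[f(s,a)=s'])`,
valued in the extended reals. -/
noncomputable def RbarDet {S A : Type*} [Fintype S] [Fintype A]
    (d : S → ℝ) (N : S → S → ℝ) (V : S → ℝ) (α : ℝ) (Z : S → ℝ)
    (f : S → A → S) (π : S → A → ℝ) : EReal :=
  ∑ s, (d s : EReal) *
    ∑ s', ((N s s' * (Real.exp (α * V s') / Z s) : ℝ) : EReal) *
      elog (∑ a, π s a * (if f s a = s' then (1 : ℝ) else 0))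

/-! The value-aware policy pushes `β(·|s)` forward along `f(s, ·)` to exactly the weights
`w(s'|s) = N(s'|s)·exp(α V(s'))/Z(s)` that appear in `R̄`. Hence, for each state `s`, the inner sum
of `R̄(π)` is the cross entropy `Σ_{s'} w(s'|s)·log q_π(s'|s)` of the next-state distribution `q_π`
of `π` against `w(·|s)`, and by Gibbs' inequality it is largest when `q_π = w`, where it is finite. -/

open Finset

lemma EReal.coe_sum {ι : Type*} (s : Finset ι) (g : ι → ℝ) :
    ((∑ i ∈ s, g i : ℝ) : EReal) = ∑ i ∈ s, (g i : EReal) :=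
  map_sum (⟨⟨Real.toEReal, EReal.coe_zero⟩, EReal.coe_add⟩ : ℝ →+ EReal) g s

lemma Real.mul_log_le_mul_log_add_sub {p q : ℝ} (hp : 0 ≤ p) (hq : 0 ≤ q) (hpq : p ≠ 0 → q ≠ 0) :
    p * log q ≤ p * log p + (q - p) := by
  rcases hp.eq_or_lt with rfl | hp
  · simpa using hq
  have hq : 0 < q := hq.lt_of_ne' (hpq hp.ne')
  have hlog : log (q / p) ≤ q / p - 1 := log_le_sub_one_of_pos (div_pos hq hp)
  rw [log_div hq.ne' hp.ne'] at hlog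
  have := mul_le_mul_of_nonneg_left hlog hp.le
  rw [mul_sub, mul_sub, mul_div_cancel₀ _ hp.ne', mul_one] at this
  linarith

section Gibbs

variable {ι : Type*} [Fintype ι] {p q : ι → ℝ}

/-- Gibbs' inequality. -/
lemma Real.sum_mul_log_le_sum_mul_log (hp : ∀ i, 0 ≤ p i) (hq : ∀ i, 0 ≤ q i)
    (hsum : ∑ i, q i ≤ ∑ i, p i) (hpq : ∀ i, p i ≠ 0 → q i ≠ 0) :
    ∑ i, p i * log (q i) ≤ ∑ i, p i * log (p i) :=
  calc ∑ i, p i * log (q i)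
      ≤ ∑ i, (p i * log (p i) + (q i - p i)) :=
        sum_le_sum fun i _ => Real.mul_log_le_mul_log_add_sub (hp i) (hq i) (hpq i)
    _ = ∑ i, p i * log (p i) + (∑ i, q i - ∑ i, p i) := by rw [sum_add_distrib, sum_sub_distrib]
    _ ≤ ∑ i, p i * log (p i) := by linarith

lemma sum_coe_mul_elog_eq_coe (hpq : ∀ i, p i ≠ 0 → q i ≠ 0) :
    ∑ i, (p i : EReal) * elog (q i) = ((∑ i, p i * Real.log (q i) : ℝ) : EReal) := by
  rw [EReal.coe_sum]
  refine sum_congr rfl fun i _ => ?_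
  by_cases hpi : p i = 0
  · simp [hpi]
  · rw [elog, if_neg (hpq i hpi), EReal.coe_mul]

lemma sum_coe_mul_elog_le_sum_coe_mul_elog (hp : ∀ i, 0 ≤ p i) (hq : ∀ i, 0 ≤ q i)
    (hsum : ∑ i, q i ≤ ∑ i, p i) :
    ∑ i, (p i : EReal) * elog (q i) ≤ ∑ i, (p i : EReal) * elog (p i) := by
  by_cases hpq : ∀ i, p i ≠ 0 → q i ≠ 0
  · rw [sum_coe_mul_elog_eq_coe hpq, sum_coe_mul_elog_eq_coe fun _ h => h, EReal.coe_le_coe_iff]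
    exact Real.sum_mul_log_le_sum_mul_log hp hq hsum hpq
  push Not at hpq
  obtain ⟨i, hpi, hqi⟩ := hpq
  have hterm : (p i : EReal) * elog (q i) = ⊥ := by
    rw [elog, if_pos hqi]
    exact EReal.mul_bot_of_pos (EReal.coe_pos.2 ((hp i).lt_of_ne' hpi))
  rw [← add_sum_erase _ _ (mem_univ i), hterm, EReal.bot_add]
  exact bot_le

end Gibbs

section NextState

variable {S A : Type*} [Fintype A] (f : S → A → S)

noncomputable def nextStateProb (π : S → A → ℝ) (s s' : S) : ℝ :=
  ∑ a, π s a * if f s a = s' then 1 else 0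

lemma nextStateProb_nonneg {π : S → A → ℝ} {s : S} (hπ : ∀ a, 0 ≤ π s a) (s' : S) :
    0 ≤ nextStateProb f π s s' :=
  sum_nonneg fun a _ => mul_nonneg (hπ a) (by split_ifs <;> norm_num)

lemma sum_mul_nextStateProb [Fintype S] (g : S → ℝ) (π : S → A → ℝ) (s : S) :
    ∑ s', g s' * nextStateProb f π s s' = ∑ a, g (f s a) * π s a := by
  simp only [nextStateProb, mul_sum]
  rw [sum_comm]
  refine sum_congr rfl fun a _ => ?_
  simp

lemma sum_nextStateProb [Fintype S] (π : S → A → ℝ) (s : S) :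
    ∑ s', nextStateProb f π s s' = ∑ a, π s a := by
  simpa using sum_mul_nextStateProb f 1 π s

lemma nextStateProb_mul_left (g : S → S → ℝ) (π : S → A → ℝ) (s s' : S) :
    nextStateProb f (fun s a => g s (f s a) * π s a) s s' = g s s' * nextStateProb f π s s' := by
  simp only [nextStateProb, mul_sum]
  refine sum_congr rfl fun a _ => ?_
  split_ifs with h
  · rw [h, mul_one, mul_one]
  · simp

end NextState

section Regularizer

variable {S A : Type*} [Fintype S] [Fintype A] {f : S → A → S} {d : S → ℝ} {N : S → S → ℝ}
  {V : S → ℝ} {α : ℝ} {Z : S → ℝ} {π ρ : S → A → ℝ}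

lemma RbarDet_eq_sum_nextStateProb :
    RbarDet d N V α Z f π = ∑ s, (d s : EReal) * ∑ s',
      ((N s s' * (Real.exp (α * V s') / Z s) : ℝ) : EReal) * elog (nextStateProb f π s s') :=
  rfl

lemma RbarDet_eq_coe_of_nextStateProb_eq
    (hρ : ∀ s s', nextStateProb f ρ s s' = N s s' * (Real.exp (α * V s') / Z s)) :
    RbarDet d N V α Z f ρ = ((∑ s, d s * ∑ s', nextStateProb f ρ s s' *
      Real.log (nextStateProb f ρ s s') : ℝ) : EReal) := by
  rw [RbarDet_eq_sum_nextStateProb, EReal.coe_sum]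
  refine sum_congr rfl fun s _ => ?_
  simp only [← hρ]
  rw [EReal.coe_mul, ← sum_coe_mul_elog_eq_coe fun _ h => h]

lemma RbarDet_le_of_nextStateProb_eq (hd : ∀ s, 0 ≤ d s) (hπ : ∀ s a, 0 ≤ π s a)
    (hρ0 : ∀ s a, 0 ≤ ρ s a) (hπρ : ∀ s, ∑ a, π s a ≤ ∑ a, ρ s a)
    (hρ : ∀ s s', nextStateProb f ρ s s' = N s s' * (Real.exp (α * V s') / Z s)) :
    RbarDet d N V α Z f π ≤ RbarDet d N V α Z f ρ := by
  rw [RbarDet_eq_sum_nextStateProb, RbarDet_eq_sum_nextStateProb]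
  refine sum_le_sum fun s _ => mul_le_mul_of_nonneg_left ?_ (EReal.coe_nonneg.2 (hd s))
  simp only [← hρ]
  refine sum_coe_mul_elog_le_sum_coe_mul_elog (nextStateProb_nonneg f (hρ0 s))
    (nextStateProb_nonneg f (hπ s)) ?_
  simpa only [sum_nextStateProb] using hπρ s

end Regularizer

theorem stmt7_general {S A : Type*} [Fintype S] [Fintype A]
    (f : S → A → S)
    (d : S → ℝ) (hd0 : ∀ s, 0 ≤ d s)
    (β : S → A → ℝ) (hβ0 : ∀ s a, 0 ≤ β s a) (hβ1 : ∀ s, ∑ a, β s a = 1)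
    (N : S → S → ℝ)
    (hN : ∀ s s', N s s' = ∑ a, β s a * (if f s a = s' then (1 : ℝ) else 0))
    (V : S → ℝ) (α : ℝ)
    (Z : S → ℝ) (hZ : ∀ s, Z s = ∑ s', Real.exp (α * V s') * N s s')
    (πst : S → A → ℝ)
    (hπst : ∀ s a, πst s a = Real.exp (α * V (f s a)) * β s a / Z s) :
    (∀ π : S → A → ℝ, (∀ s a, 0 ≤ π s a) → (∀ s, ∑ a, π s a = 1) →
      RbarDet d N V α Z f π ≤ RbarDet d N V α Z f πst) ∧
    (∃ r : ℝ, RbarDet d N V α Z f πst = (r : EReal)) := by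
  have hZ' (s : S) : Z s = ∑ a, Real.exp (α * V (f s a)) * β s a := by
    simp only [hZ, hN]
    exact sum_mul_nextStateProb f (fun s' => Real.exp (α * V s')) β s
  have hZpos (s : S) : 0 < Z s := by
    obtain ⟨a, -, ha⟩ := exists_lt_of_sum_lt (f := fun _ => (0 : ℝ)) (g := β s) (s := univ)
      (by simp [hβ1])
    rw [hZ']
    exact sum_pos' (fun a _ => mul_nonneg (Real.exp_pos _).le (hβ0 s a))
      ⟨a, mem_univ a, mul_pos (Real.exp_pos _) ha⟩
  have hπst' : πst = fun s a => Real.exp (α * V (f s a)) / Z s * β s a := by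
    ext s a
    rw [hπst, div_mul_eq_mul_div]
  have hπst0 (s : S) (a : A) : 0 ≤ πst s a := by
    rw [hπst']
    exact mul_nonneg (div_nonneg (Real.exp_pos _).le (hZpos s).le) (hβ0 s a)
  have hπst1 (s : S) : ∑ a, πst s a = 1 := by
    simp only [hπst', div_mul_eq_mul_div, ← sum_div, ← hZ', div_self (hZpos s).ne']
  have hweights (s s' : S) : nextStateProb f πst s s' = N s s' * (Real.exp (α * V s') / Z s) := by
    rw [hπst', nextStateProb_mul_left f (fun s s' => Real.exp (α * V s') / Z s), hN, mul_comm]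
    rfl
  refine ⟨fun π hπ0 hπ1 => ?_, ⟨_, RbarDet_eq_coe_of_nextStateProb_eq hweights⟩⟩
  exact RbarDet_le_of_nextStateProb_eq hd0 hπ0 hπst0 (fun s => ((hπ1 s).trans (hπst1 s).symm).le)
    hweights

/-- in the deterministic tabular setting, the value-aware policy `π*` globally
maximizes `R̄`, and `R̄(π*)` is a real number (in particular `R̄(π*) > −∞`). -/
theorem stmt7 {S A : Type*} [Fintype S] [Fintype A] [Nonempty S] [Nonempty A]
    (f : S → A → S)
    (d : S → ℝ) (hd0 : ∀ s, 0 ≤ d s) (hd1 : ∑ s, d s = 1)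
    (β : S → A → ℝ) (hβ0 : ∀ s a, 0 ≤ β s a) (hβ1 : ∀ s, ∑ a, β s a = 1)
    (N : S → S → ℝ)
    (hN : ∀ s s', N s s' = ∑ a, β s a * (if f s a = s' then (1 : ℝ) else 0))
    (V : S → ℝ) (α : ℝ)
    (Z : S → ℝ) (hZ : ∀ s, Z s = ∑ s', Real.exp (α * V s') * N s s')
    (πst : S → A → ℝ)
    (hπst : ∀ s a, πst s a = Real.exp (α * V (f s a)) * β s a / Z s) :
    (∀ π : S → A → ℝ, (∀ s a, 0 ≤ π s a) → (∀ s, ∑ a, π s a = 1) →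
      RbarDet d N V α Z f π ≤ RbarDet d N V α Z f πst) ∧
    (∃ r : ℝ, RbarDet d N V α Z f πst = (r : EReal)) :=
  stmt7_general f d hd0 β hβ0 hβ1 N hN V α Z hZ πst hπst
end

section
/- In the stochastic tabular setting, for every policy π, R̄(π_in) ≥ R̄(π), the inequality holding in the extended reals, where π_in is the projection of π onto the support of the behavior policy β. -/
open scoped BigOperators Classical

/-- The regularizer
`R̄(π) = Σ_s d(s)·Σ_{s'} N(s'|s)·(exp(α V(s'))/Z(s))·log(Σ_a M(s'|s,a)·π(a|s))`,
valued in the extended reals. -/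
noncomputable def RbarSto {S A : Type*} [Fintype S] [Fintype A]
    (d : S → ℝ) (N : S → S → ℝ) (V : S → ℝ) (α : ℝ) (Z : S → ℝ)
    (M : S → A → S → ℝ) (π : S → A → ℝ) : EReal :=
  ∑ s, (d s : EReal) *
    ∑ s', ((N s s' * (Real.exp (α * V s') / Z s) : ℝ) : EReal) *
      elog (∑ a, M s a s' * π s a)

/-!
Outside the support of `β` the dynamics `M(·|s,a)` vanish, and on the support the projection only
adds the nonnegative mass `ε(s)/n(s)`. Hence each mixture `Σ_a M(s'|s,a) π(a|s)` can only grow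
under projection, and `R̄` is a nonnegative combination of logarithms of these mixtures.
-/

lemma elog_le_elog {x y : ℝ} (hx : 0 ≤ x) (h : x ≤ y) : elog x ≤ elog y := by
  unfold elog
  rcases hx.eq_or_lt with rfl | hx
  · simp
  · rw [if_neg hx.ne', if_neg (hx.trans_le h).ne']
    exact_mod_cast Real.log_le_log hx h

lemma RbarSto_mono {S A : Type*} [Fintype S] [Fintype A]
    {d : S → ℝ} {N : S → S → ℝ} {V : S → ℝ} {α : ℝ} {Z : S → ℝ} {M : S → A → S → ℝ}
    {π π' : S → A → ℝ} (hd0 : ∀ s, 0 ≤ d s) (hN0 : ∀ s s', 0 ≤ N s s') (hZ0 : ∀ s, 0 ≤ Z s)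
    (hMπ0 : ∀ s a s', 0 ≤ M s a s' * π s a)
    (hle : ∀ s a s', M s a s' * π s a ≤ M s a s' * π' s a) :
    RbarSto d N V α Z M π ≤ RbarSto d N V α Z M π' := by
  unfold RbarSto
  refine Finset.sum_le_sum fun s _ => mul_le_mul_of_nonneg_left ?_ (mod_cast hd0 s)
  refine Finset.sum_le_sum fun s' _ => mul_le_mul_of_nonneg_left ?_ ?_
  · exact elog_le_elog (Finset.sum_nonneg fun a _ => hMπ0 s a s')
      (Finset.sum_le_sum fun a _ => hle s a s')
  · have : 0 ≤ N s s' * (Real.exp (α * V s') / Z s) := by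
      have := hN0 s s'; have := hZ0 s; positivity
    exact_mod_cast this

lemma mul_le_mul_projected {S A T : Type*} {β π πin : S → A → ℝ} {M : S → A → T → ℝ}
    {ε : S → ℝ} {n : S → ℕ} (hβ0 : ∀ s a, 0 ≤ β s a) (hM0 : ∀ s a s', 0 ≤ M s a s')
    (hMzero : ∀ s a, β s a = 0 → ∀ s', M s a s' = 0) (hε0 : ∀ s, 0 ≤ ε s)
    (hπin : ∀ s a, πin s a = if 0 < β s a then π s a + ε s / n s else 0) (s : S) (a : A) (s' : T) :
    M s a s' * π s a ≤ M s a s' * πin s a := by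
  rcases (hβ0 s a).eq_or_lt with hβ | hβ
  · simp [hMzero s a hβ.symm s']
  · refine mul_le_mul_of_nonneg_left ?_ (hM0 s a s')
    rw [hπin, if_pos hβ]
    have := hε0 s
    exact le_add_of_nonneg_right (by positivity)

theorem stmt11_general {S A : Type*} [Fintype S] [Fintype A]
    (d : S → ℝ) (hd0 : ∀ s, 0 ≤ d s)
    (β : S → A → ℝ) (hβ0 : ∀ s a, 0 ≤ β s a)
    (M : S → A → S → ℝ) (hM0 : ∀ s a s', 0 ≤ M s a s')
    (hMzero : ∀ s a, β s a = 0 → ∀ s', M s a s' = 0)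
    (N : S → S → ℝ) (hN : ∀ s s', N s s' = ∑ a, β s a * M s a s')
    (V : S → ℝ) (α : ℝ)
    (Z : S → ℝ) (hZ : ∀ s, Z s = ∑ s', Real.exp (α * V s') * N s s')
    (π : S → A → ℝ) (hπ0 : ∀ s a, 0 ≤ π s a)
    (ε : S → ℝ) (hε : ∀ s, ε s = ∑ a ∈ Finset.univ.filter (fun a => β s a = 0), π s a)
    (n : S → ℕ)
    (πin : S → A → ℝ)
    (hπin : ∀ s a, πin s a = if 0 < β s a then π s a + ε s / n s else 0) :
    RbarSto d N V α Z M π ≤ RbarSto d N V α Z M πin := by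
  have hN0 : ∀ s s', 0 ≤ N s s' := fun s s' =>
    (hN s s') ▸ Finset.sum_nonneg fun a _ => mul_nonneg (hβ0 s a) (hM0 s a s')
  have hZ0 : ∀ s, 0 ≤ Z s := fun s =>
    (hZ s) ▸ Finset.sum_nonneg fun s' _ => mul_nonneg (Real.exp_pos _).le (hN0 s s')
  have hε0 : ∀ s, 0 ≤ ε s := fun s => (hε s) ▸ Finset.sum_nonneg fun a _ => hπ0 s a
  exact RbarSto_mono hd0 hN0 hZ0 (fun s a s' => mul_nonneg (hM0 s a s') (hπ0 s a))
    (mul_le_mul_projected hβ0 hM0 hMzero hε0 hπin)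

/-- in the stochastic tabular setting, projecting a policy onto the support of the
behavior policy does not decrease the regularizer: `R̄(π_in) ≥ R̄(π)`. -/
theorem stmt11 {S A : Type*} [Fintype S] [Fintype A] [Nonempty S] [Nonempty A]
    (d : S → ℝ) (hd0 : ∀ s, 0 ≤ d s) (hd1 : ∑ s, d s = 1)
    (β : S → A → ℝ) (hβ0 : ∀ s a, 0 ≤ β s a) (hβ1 : ∀ s, ∑ a, β s a = 1)
    (M : S → A → S → ℝ) (hM0 : ∀ s a s', 0 ≤ M s a s')
    (hMzero : ∀ s a, β s a = 0 → ∀ s', M s a s' = 0)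
    (hMpmf : ∀ s a, 0 < β s a → ∑ s', M s a s' = 1)
    (N : S → S → ℝ) (hN : ∀ s s', N s s' = ∑ a, β s a * M s a s')
    (V : S → ℝ) (α : ℝ)
    (Z : S → ℝ) (hZ : ∀ s, Z s = ∑ s', Real.exp (α * V s') * N s s')
    (π : S → A → ℝ) (hπ0 : ∀ s a, 0 ≤ π s a) (hπ1 : ∀ s, ∑ a, π s a = 1)
    (ε : S → ℝ) (hε : ∀ s, ε s = ∑ a ∈ Finset.univ.filter (fun a => β s a = 0), π s a)
    (n : S → ℕ) (hn : ∀ s, n s = (Finset.univ.filter (fun a => 0 < β s a)).card)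
    (πin : S → A → ℝ)
    (hπin : ∀ s a, πin s a = if 0 < β s a then π s a + ε s / n s else 0) :
    RbarSto d N V α Z M π ≤ RbarSto d N V α Z M πin :=
  stmt11_general d hd0 β hβ0 M hM0 hMzero N hN V α Z hZ π hπ0 ε hε n πin hπin
end

section
/- In the stochastic tabular setting, let π be a policy with R̄₁(π) > −∞. If there exists a state s₁ with d(s₁) > 0 and an action ã with π(ã|s₁) > 0 and β(ã|s₁) = 0 (i.e., π is not constrained within the support of the behavior policy at some state in the support of d), then R̄₁(π_in) > R̄₁(π). -/
/-! Projecting `π` onto the support of `β` can only add mass to actions with `β > 0`, and the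
actions it removes mass from have `M(·|s,a) = 0`, so every mixture `Σ_a M(s'|s,a)·π(a|s)` weakly
increases. Since `R̄₁(π) > −∞`, every mixture carrying positive weight in `R̄₁` is positive, so the
regularizer is a finite real sum and increases with the mixtures through `log`. At `s₁` the freed
mass `ε(s₁) > 0` is spread over a behaviour action `a₀`, which reaches some `s₂` with
`M(s₂|s₁,a₀) > 0`; there the mixture increases strictly while its weight `N(s₂|s₁)·exp(…)` is
positive. -/

open scoped BigOperators Classical

/-- The regularizer
`R̄₁(π) = Σ_s d(s)·Σ_{s'} N(s'|s)·exp(α(V(s')−V(s)))·log(Σ_a M(s'|s,a)·π(a|s))`,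
valued in the extended reals. -/
noncomputable def Rbar1Sto {S A : Type*} [Fintype S] [Fintype A]
    (d : S → ℝ) (N : S → S → ℝ) (V : S → ℝ) (α : ℝ)
    (M : S → A → S → ℝ) (π : S → A → ℝ) : EReal :=
  ∑ s, (d s : EReal) *
    ∑ s', ((N s s' * Real.exp (α * (V s' - V s)) : ℝ) : EReal) *
      elog (∑ a, M s a s' * π s a)

open Finset

namespace EReal

lemma coe_finset_sum {ι : Type*} (s : Finset ι) (f : ι → ℝ) :
    ((∑ i ∈ s, f i : ℝ) : EReal) = ∑ i ∈ s, (f i : EReal) :=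
  map_sum (⟨⟨Real.toEReal, coe_zero⟩, coe_add⟩ : ℝ →+ EReal) f s

variable {ι : Type*} [Fintype ι] {w : ι → ℝ} {e : ι → EReal}

lemma sum_coe_mul_eq_coe {r : ι → ℝ} (hw : ∀ i, 0 ≤ w i) (h : ∀ i, 0 < w i → e i = r i) :
    ∑ i, (w i : EReal) * e i = ((∑ i, w i * r i : ℝ) : EReal) := by
  rw [coe_finset_sum]
  refine sum_congr rfl fun i _ => ?_
  rcases (hw i).eq_or_lt with hwi | hwi
  · simp [← hwi]
  · rw [h i hwi, coe_mul]

lemma bot_lt_of_bot_lt_sum_coe_mul (h : ⊥ < ∑ i, (w i : EReal) * e i) {i : ι} (hi : 0 < w i) :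
    ⊥ < e i := by
  have hterm := WithBot.bot_lt_sum_iff.1 h i (mem_univ i)
  contrapose! hterm
  rw [le_bot_iff.1 hterm, coe_mul_bot_of_pos hi]
  exact lt_irrefl ⊥

end EReal

lemma elog_of_ne_zero {x : ℝ} (hx : x ≠ 0) : elog x = Real.log x := if_neg hx

lemma ne_zero_of_bot_lt_elog {x : ℝ} (h : ⊥ < elog x) : x ≠ 0 := by
  rintro rfl
  simp [elog] at h

section WeightedSum

lemma mul_le_mul_of_le_of_pos {w f g : ℝ} (hw : 0 ≤ w) (hfg : 0 < w → f ≤ g) : w * f ≤ w * g := by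
  rcases hw.eq_or_lt with rfl | hw
  · simp
  · exact mul_le_mul_of_nonneg_left (hfg hw) hw.le

variable {ι : Type*} [Fintype ι] {w f g : ι → ℝ}

lemma sum_mul_le_sum_mul_of_le_of_pos (hw : ∀ i, 0 ≤ w i) (hfg : ∀ i, 0 < w i → f i ≤ g i) :
    ∑ i, w i * f i ≤ ∑ i, w i * g i :=
  sum_le_sum fun i _ => mul_le_mul_of_le_of_pos (hw i) (hfg i)

lemma sum_mul_lt_sum_mul_of_le_of_pos (hw : ∀ i, 0 ≤ w i) (hfg : ∀ i, 0 < w i → f i ≤ g i)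
    {j : ι} (hj : 0 < w j) (hlt : f j < g j) :
    ∑ i, w i * f i < ∑ i, w i * g i :=
  sum_lt_sum (fun i _ => mul_le_mul_of_le_of_pos (hw i) (hfg i))
    ⟨j, mem_univ j, mul_lt_mul_of_pos_left hlt hj⟩

end WeightedSum

lemma sum_mul_ite_add {A : Type*} [Fintype A] {P : A → Prop} [DecidablePred P] {m p : A → ℝ}
    (t : ℝ) (hm : ∀ a, ¬ P a → m a = 0) :
    ∑ a, m a * (if P a then p a + t else 0) = ∑ a, m a * p a + t * ∑ a ∈ univ.filter P, m a := by
  rw [sum_filter, mul_sum, ← sum_add_distrib]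
  refine sum_congr rfl fun a _ => ?_
  split_ifs with ha
  · ring
  · simp [hm a ha]

section Regularizer

variable {S A : Type*} [Fintype S] [Fintype A] {d : S → ℝ} {N : S → S → ℝ} {V : S → ℝ} {α : ℝ}
  {M : S → A → S → ℝ}

lemma Rbar1Sto_eq_coe (hd0 : ∀ s, 0 ≤ d s) (hN0 : ∀ s s', 0 ≤ N s s') {ρ : S → A → ℝ}
    (hρ : ∀ s s', 0 < d s → 0 < N s s' → ∑ a, M s a s' * ρ s a ≠ 0) :
    Rbar1Sto d N V α M ρ =
      ((∑ s, d s * ∑ s', N s s' * Real.exp (α * (V s' - V s)) *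
        Real.log (∑ a, M s a s' * ρ s a) : ℝ) : EReal) := by
  refine EReal.sum_coe_mul_eq_coe hd0 fun s hs => ?_
  refine EReal.sum_coe_mul_eq_coe (fun s' => mul_nonneg (hN0 s s') (Real.exp_pos _).le)
    fun s' hs' => elog_of_ne_zero (hρ s s' hs ?_)
  exact pos_of_mul_pos_left hs' (Real.exp_pos _).le

lemma mixture_ne_zero_of_bot_lt_Rbar1Sto {ρ : S → A → ℝ} (hfin : ⊥ < Rbar1Sto d N V α M ρ)
    {s s' : S} (hs : 0 < d s) (hss' : 0 < N s s') : ∑ a, M s a s' * ρ s a ≠ 0 :=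
  ne_zero_of_bot_lt_elog <| EReal.bot_lt_of_bot_lt_sum_coe_mul
    (EReal.bot_lt_of_bot_lt_sum_coe_mul hfin hs) (mul_pos hss' (Real.exp_pos _))

lemma Rbar1Sto_lt_of_mixture_le (hd0 : ∀ s, 0 ≤ d s) (hN0 : ∀ s s', 0 ≤ N s s')
    {π π' : S → A → ℝ} (hx0 : ∀ s s', 0 ≤ ∑ a, M s a s' * π s a)
    (hfin : ⊥ < Rbar1Sto d N V α M π)
    (hle : ∀ s s', ∑ a, M s a s' * π s a ≤ ∑ a, M s a s' * π' s a)
    {s₁ s₂ : S} (hs₁ : 0 < d s₁) (hs₁₂ : 0 < N s₁ s₂)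
    (hlt : ∑ a, M s₁ a s₂ * π s₁ a < ∑ a, M s₁ a s₂ * π' s₁ a) :
    Rbar1Sto d N V α M π < Rbar1Sto d N V α M π' := by
  have hpos : ∀ s s', 0 < d s → 0 < N s s' → 0 < ∑ a, M s a s' * π s a := fun s s' hs hss' =>
    (hx0 s s').lt_of_ne' (mixture_ne_zero_of_bot_lt_Rbar1Sto hfin hs hss')
  have hN0' : ∀ s s', 0 ≤ N s s' * Real.exp (α * (V s' - V s)) := fun s s' =>
    mul_nonneg (hN0 s s') (Real.exp_pos _).le
  have hN_pos : ∀ {s s'}, 0 < N s s' * Real.exp (α * (V s' - V s)) → 0 < N s s' := fun h =>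
    pos_of_mul_pos_left h (Real.exp_pos _).le
  rw [Rbar1Sto_eq_coe hd0 hN0 fun s s' hs hss' => (hpos s s' hs hss').ne',
    Rbar1Sto_eq_coe hd0 hN0 fun s s' hs hss' => ((hpos s s' hs hss').trans_le (hle s s')).ne',
    EReal.coe_lt_coe_iff]
  refine sum_mul_lt_sum_mul_of_le_of_pos hd0 (fun s hs => ?_) hs₁ ?_
  · exact sum_mul_le_sum_mul_of_le_of_pos (hN0' s) fun s' hss' =>
      Real.log_le_log (hpos s s' hs (hN_pos hss')) (hle s s')
  · exact sum_mul_lt_sum_mul_of_le_of_pos (hN0' s₁)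
      (fun s' hss' => Real.log_le_log (hpos s₁ s' hs₁ (hN_pos hss')) (hle s₁ s'))
      (mul_pos hs₁₂ (Real.exp_pos _)) (Real.log_lt_log (hpos s₁ s₂ hs₁ hs₁₂) hlt)

end Regularizer

theorem stmt14_general {S A : Type*} [Fintype S] [Fintype A]
    (d : S → ℝ) (hd0 : ∀ s, 0 ≤ d s)
    (β : S → A → ℝ) (hβ0 : ∀ s a, 0 ≤ β s a) (hβ1 : ∀ s, ∑ a, β s a = 1)
    (M : S → A → S → ℝ) (hM0 : ∀ s a s', 0 ≤ M s a s')
    (hMzero : ∀ s a, β s a = 0 → ∀ s', M s a s' = 0)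
    (hMpmf : ∀ s a, 0 < β s a → ∑ s', M s a s' = 1)
    (N : S → S → ℝ) (hN : ∀ s s', N s s' = ∑ a, β s a * M s a s')
    (V : S → ℝ) (α : ℝ)
    (π : S → A → ℝ) (hπ0 : ∀ s a, 0 ≤ π s a)
    (ε : S → ℝ) (hε : ∀ s, ε s = ∑ a ∈ Finset.univ.filter (fun a => β s a = 0), π s a)
    (n : S → ℕ) (hn : ∀ s, n s = (Finset.univ.filter (fun a => 0 < β s a)).card)
    (πin : S → A → ℝ)
    (hπin : ∀ s a, πin s a = if 0 < β s a then π s a + ε s / n s else 0)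
    (hfin : (⊥ : EReal) < Rbar1Sto d N V α M π)
    (s₁ : S) (hs₁ : 0 < d s₁)
    (atil : A) (hπatil : 0 < π s₁ atil) (hβatil : β s₁ atil = 0) :
    Rbar1Sto d N V α M π < Rbar1Sto d N V α M πin := by
  have hN0 : ∀ s s', 0 ≤ N s s' := fun s s' =>
    (hN s s').symm ▸ sum_nonneg fun a _ => mul_nonneg (hβ0 s a) (hM0 s a s')
  have hmixture : ∀ s s', ∑ a, M s a s' * πin s a =
      ∑ a, M s a s' * π s a + ε s / n s * ∑ a ∈ univ.filter (fun a => 0 < β s a), M s a s' :=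
    fun s s' => by
      simp_rw [hπin]
      exact sum_mul_ite_add _ fun a ha => hMzero s a ((hβ0 s a).eq_of_not_lt ha).symm s'
  have hle : ∀ s s', ∑ a, M s a s' * π s a ≤ ∑ a, M s a s' * πin s a := fun s s' =>
    (hmixture s s').symm ▸ le_add_of_nonneg_right (mul_nonneg
      (div_nonneg ((hε s).symm ▸ sum_nonneg fun a _ => hπ0 s a) (n s).cast_nonneg)
      (sum_nonneg fun a _ => hM0 s a s'))
  have hεpos : 0 < ε s₁ := (hε s₁).symm ▸
    hπatil.trans_le (single_le_sum (fun a _ => hπ0 s₁ a) (by simpa using hβatil))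
  obtain ⟨a₀, -, ha₀⟩ := exists_lt_of_sum_lt (by simp [hβ1 s₁] : ∑ _a : A, (0 : ℝ) < ∑ a, β s₁ a)
  obtain ⟨s₂, -, hs₂⟩ :=
    exists_lt_of_sum_lt (by simp [hMpmf s₁ a₀ ha₀] : ∑ _s : S, (0 : ℝ) < ∑ s', M s₁ a₀ s')
  have hn₁ : (0 : ℝ) < n s₁ := by
    rw [hn]
    exact_mod_cast card_pos.2 ⟨a₀, by simpa using ha₀⟩
  have hlt : ∑ a, M s₁ a s₂ * π s₁ a < ∑ a, M s₁ a s₂ * πin s₁ a := by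
    rw [hmixture]
    exact lt_add_of_pos_right _ (mul_pos (div_pos hεpos hn₁)
      (hs₂.trans_le (single_le_sum (fun a _ => hM0 s₁ a s₂) (by simpa using ha₀))))
  have hN₁₂ : 0 < N s₁ s₂ := (hN s₁ s₂).symm ▸ (mul_pos ha₀ hs₂).trans_le
    (single_le_sum (f := fun a => β s₁ a * M s₁ a s₂)
      (fun a _ => mul_nonneg (hβ0 s₁ a) (hM0 s₁ a s₂)) (mem_univ a₀))
  exact Rbar1Sto_lt_of_mixture_le hd0 hN0
    (fun s s' => sum_nonneg fun a _ => mul_nonneg (hM0 s a s') (hπ0 s a)) hfin hle hs₁ hN₁₂ hlt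

/-- in the stochastic tabular setting, if `R̄₁(π) > −∞` and `π` takes an action
outside the support of `β` with positive probability at some state in the support of `d`, then
the projected policy `π_in` strictly improves the regularizer: `R̄₁(π_in) > R̄₁(π)`. -/
theorem stmt14 {S A : Type*} [Fintype S] [Fintype A] [Nonempty S] [Nonempty A]
    (d : S → ℝ) (hd0 : ∀ s, 0 ≤ d s) (hd1 : ∑ s, d s = 1)
    (β : S → A → ℝ) (hβ0 : ∀ s a, 0 ≤ β s a) (hβ1 : ∀ s, ∑ a, β s a = 1)
    (M : S → A → S → ℝ) (hM0 : ∀ s a s', 0 ≤ M s a s')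
    (hMzero : ∀ s a, β s a = 0 → ∀ s', M s a s' = 0)
    (hMpmf : ∀ s a, 0 < β s a → ∑ s', M s a s' = 1)
    (N : S → S → ℝ) (hN : ∀ s s', N s s' = ∑ a, β s a * M s a s')
    (V : S → ℝ) (α : ℝ)
    (π : S → A → ℝ) (hπ0 : ∀ s a, 0 ≤ π s a) (hπ1 : ∀ s, ∑ a, π s a = 1)
    (ε : S → ℝ) (hε : ∀ s, ε s = ∑ a ∈ Finset.univ.filter (fun a => β s a = 0), π s a)
    (n : S → ℕ) (hn : ∀ s, n s = (Finset.univ.filter (fun a => 0 < β s a)).card)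
    (πin : S → A → ℝ)
    (hπin : ∀ s a, πin s a = if 0 < β s a then π s a + ε s / n s else 0)
    (hfin : (⊥ : EReal) < Rbar1Sto d N V α M π)
    (s₁ : S) (hs₁ : 0 < d s₁)
    (atil : A) (hπatil : 0 < π s₁ atil) (hβatil : β s₁ atil = 0) :
    Rbar1Sto d N V α M π < Rbar1Sto d N V α M πin :=
  stmt14_general d hd0 β hβ0 hβ1 M hM0 hMzero hMpmf N hN V α π hπ0 ε hε n hn πin hπin hfin s₁ hs₁
    atil hπatil hβatil
end

section
/- In the stochastic tabular setting, if a policy π* maximizes R̄ over all policies (i.e., R̄(π) ≤ R̄(π*) for every policy π), then π* is constrained within the support of the behavior policy at every state in the support of d: for every s with d(s) > 0 and every action a, π*(a|s) > 0 implies β(a|s) > 0. -/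
open scoped BigOperators Classical

/-!
If `π*` put mass on an action `a₀` with `β(a₀|s₀) = 0` at a state with `d(s₀) > 0`, then
`M(·|s₀,a₀) = 0`, so that mass is wasted: moving it to an action `b₀` with `β(b₀|s₀) > 0` does not
decrease any `Σ_a M(s'|s₀,a) π(a|s₀)` and strictly increases it at a state `s₁` with
`M(s₁|s₀,b₀) > 0`, which carries positive weight. Since `R̄(β)` is finite, so is `R̄(π*)`; hence
every logarithm with positive weight has a positive argument, `R̄` is a genuine real sum at `π*`,
and strict monotonicity of `log` makes the moved policy strictly better than `π*`.
-/

lemma EReal.coe_finset_sum_s16 {ι : Type*} (s : Finset ι) (f : ι → ℝ) :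
    ((∑ i ∈ s, f i : ℝ) : EReal) = ∑ i ∈ s, (f i : EReal) :=
  map_sum (⟨⟨Real.toEReal, EReal.coe_zero⟩, EReal.coe_add⟩ : ℝ →+ EReal) f s

lemma EReal.finset_sum_eq_bot {ι : Type*} {s : Finset ι} {f : ι → EReal} {i : ι}
    (hi : i ∈ s) (h : f i = ⊥) : ∑ j ∈ s, f j = ⊥ := by
  rw [← Finset.add_sum_erase s f hi, h, EReal.bot_add]

lemma elog_of_pos {x : ℝ} (hx : 0 < x) : elog x = (Real.log x : EReal) := by
  simp [elog, hx.ne']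

lemma elog_zero : elog 0 = ⊥ := by simp [elog]

lemma sum_coe_mul_elog {ι : Type*} (s : Finset ι) (c x : ι → ℝ)
    (hx : ∀ i ∈ s, c i ≠ 0 → 0 < x i) :
    ∑ i ∈ s, (c i : EReal) * elog (x i) = ((∑ i ∈ s, c i * Real.log (x i) : ℝ) : EReal) := by
  rw [EReal.coe_finset_sum_s16]
  refine Finset.sum_congr rfl fun i hi => ?_
  by_cases hc : c i = 0
  · simp [hc]
  · rw [elog_of_pos (hx i hi hc), EReal.coe_mul]

lemma mul_log_le_mul_log {w x y : ℝ} (hw : 0 ≤ w) (hx : 0 < w → 0 < x) (hxy : x ≤ y) :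
    w * Real.log x ≤ w * Real.log y := by
  rcases hw.eq_or_lt with rfl | hw
  · simp
  · exact mul_le_mul_of_nonneg_left (Real.log_le_log (hx hw) hxy) hw.le

lemma sum_mul_log_lt_sum_mul_log {ι : Type*} [Fintype ι] {w x y : ι → ℝ}
    (hw : ∀ i, 0 ≤ w i) (hx : ∀ i, 0 < w i → 0 < x i) (hxy : ∀ i, x i ≤ y i)
    {i₀ : ι} (hw₀ : 0 < w i₀) (hlt : x i₀ < y i₀) :
    ∑ i, w i * Real.log (x i) < ∑ i, w i * Real.log (y i) :=
  Finset.sum_lt_sum (fun i _ => mul_log_le_mul_log (hw i) (hx i) (hxy i))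
    ⟨i₀, Finset.mem_univ _, mul_lt_mul_of_pos_left (Real.log_lt_log (hx i₀ hw₀) hlt) hw₀⟩

lemma exists_pos_of_sum_eq_one {ι : Type*} [Fintype ι] {p : ι → ℝ} (hp : ∀ i, 0 ≤ p i)
    (h : ∑ i, p i = 1) : ∃ i, 0 < p i := by
  obtain ⟨i, -, hi⟩ := Finset.exists_ne_zero_of_sum_ne_zero (h.trans_ne one_ne_zero)
  exact ⟨i, (hp i).lt_of_ne' hi⟩

lemma sum_mul_sum_mul_log_lt {S T : Type*} [Fintype S] [Fintype T] {d : S → ℝ}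
    {w x y : S → T → ℝ} (hd : ∀ s, 0 ≤ d s) (hw : ∀ s t, 0 ≤ w s t)
    (hx : ∀ s t, 0 < d s → 0 < w s t → 0 < x s t) (hxy : ∀ s t, x s t ≤ y s t)
    {s₀ : S} {t₀ : T} (hd₀ : 0 < d s₀) (hw₀ : 0 < w s₀ t₀) (hlt : x s₀ t₀ < y s₀ t₀) :
    ∑ s, d s * ∑ t, w s t * Real.log (x s t) < ∑ s, d s * ∑ t, w s t * Real.log (y s t) := by
  refine Finset.sum_lt_sum (fun s _ => ?_) ⟨s₀, Finset.mem_univ _,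
    mul_lt_mul_of_pos_left (sum_mul_log_lt_sum_mul_log (hw s₀) (hx s₀ · hd₀) (hxy s₀) hw₀ hlt) hd₀⟩
  rcases (hd s).eq_or_lt with hs | hs
  · simp [← hs]
  · exact mul_le_mul_of_nonneg_left
      (Finset.sum_le_sum fun t _ => mul_log_le_mul_log (hw s t) (hx s t hs) (hxy s t)) hs.le

noncomputable def transferMass {A : Type*} [DecidableEq A] (p : A → ℝ) (a b : A) : A → ℝ :=
  p + Pi.single b (p a) - Pi.single a (p a)

section transferMass

variable {A : Type*} [DecidableEq A]

lemma transferMass_nonneg {p : A → ℝ} (hp : ∀ i, 0 ≤ p i) {a b : A} (hab : a ≠ b) (i : A) :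
    0 ≤ transferMass p a b i := by
  simp only [transferMass, Pi.add_apply, Pi.sub_apply, Pi.single_apply]
  split_ifs with hb ha ha
  · exact absurd (ha.symm.trans hb) hab
  · linarith [hp a, hp i]
  · simp [ha]
  · simpa using hp i

lemma update_transferMass_nonneg {S : Type*} [DecidableEq S] {π : S → A → ℝ} {s₀ : S} {a b : A}
    (hπ : ∀ s a, 0 ≤ π s a) (hab : a ≠ b) (s : S) (c : A) :
    0 ≤ Function.update π s₀ (transferMass (π s₀) a b) s c := by
  by_cases hs : s = s₀
  · subst hs
    simpa using transferMass_nonneg (hπ s) hab c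
  · simpa [hs] using hπ s c

variable [Fintype A]

lemma sum_transferMass (p : A → ℝ) (a b : A) : ∑ i, transferMass p a b i = ∑ i, p i := by
  simp [transferMass, Finset.sum_add_distrib, Finset.sum_sub_distrib]

lemma sum_mul_transferMass (m p : A → ℝ) (a b : A) :
    ∑ i, m i * transferMass p a b i = ∑ i, m i * p i + p a * (m b - m a) := by
  simp [transferMass, mul_add, mul_sub, Finset.sum_add_distrib, Finset.sum_sub_distrib,
    Pi.single_apply]
  ring

lemma sum_update_transferMass {S : Type*} [DecidableEq S] (π : S → A → ℝ) (s₀ : S) (a b : A)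
    (s : S) :
    ∑ c, Function.update π s₀ (transferMass (π s₀) a b) s c = ∑ c, π s c := by
  by_cases hs : s = s₀
  · subst hs
    simp [sum_transferMass]
  · simp [hs]

end transferMass

section RbarSto

variable {S A : Type*} [Fintype A] {M : S → A → S → ℝ}

def transition (M : S → A → S → ℝ) (π : S → A → ℝ) (s s' : S) : ℝ := ∑ a, M s a s' * π s a

lemma transition_nonneg {π : S → A → ℝ} (hM : ∀ s a s', 0 ≤ M s a s') (hπ : ∀ s a, 0 ≤ π s a)
    (s s' : S) : 0 ≤ transition M π s s' :=
  Finset.sum_nonneg fun a _ => mul_nonneg (hM s a s') (hπ s a)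

section update

variable [DecidableEq S] [DecidableEq A] {π : S → A → ℝ} {s₀ : S} {a b : A}

lemma transition_update_transferMass (hMa : ∀ s', M s₀ a s' = 0) (s s' : S) :
    transition M (Function.update π s₀ (transferMass (π s₀) a b)) s s' =
      transition M π s s' + if s = s₀ then π s₀ a * M s₀ b s' else 0 := by
  by_cases hs : s = s₀
  · subst hs
    simp [transition, sum_mul_transferMass, hMa]
  · simp [transition, hs]

lemma transition_le_update_transferMass (hM : ∀ s a s', 0 ≤ M s a s') (hπ : ∀ s a, 0 ≤ π s a)
    (hMa : ∀ s', M s₀ a s' = 0) (s s' : S) :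
    transition M π s s' ≤ transition M (Function.update π s₀ (transferMass (π s₀) a b)) s s' := by
  rw [transition_update_transferMass hMa]
  split_ifs
  · exact le_add_of_nonneg_right (mul_nonneg (hπ s₀ a) (hM s₀ b s'))
  · exact (add_zero _).ge

lemma transition_lt_update_transferMass (hMa : ∀ s', M s₀ a s' = 0) (hπa : 0 < π s₀ a) {s' : S}
    (hMb : 0 < M s₀ b s') :
    transition M π s₀ s' < transition M (Function.update π s₀ (transferMass (π s₀) a b)) s₀ s' := by
  rw [transition_update_transferMass hMa, if_pos rfl]
  exact lt_add_of_pos_right _ (mul_pos hπa hMb)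

end update

noncomputable def rbarWeight (N : S → S → ℝ) (V : S → ℝ) (α : ℝ) (Z : S → ℝ) (s s' : S) : ℝ :=
  N s s' * (Real.exp (α * V s') / Z s)

variable {N : S → S → ℝ} {V : S → ℝ} {α : ℝ} {Z : S → ℝ}

lemma rbarWeight_nonneg (hN : ∀ s s', 0 ≤ N s s') (hZ : ∀ s, 0 ≤ Z s) (s s' : S) :
    0 ≤ rbarWeight N V α Z s s' :=
  mul_nonneg (hN s s') (div_nonneg (Real.exp_pos _).le (hZ s))

lemma pos_of_rbarWeight_pos (hZ : ∀ s, 0 ≤ Z s) {s s' : S} (hw : 0 < rbarWeight N V α Z s s') :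
    0 < N s s' :=
  pos_of_mul_pos_left hw (div_nonneg (Real.exp_pos _).le (hZ s))

variable [Fintype S] {d : S → ℝ}

lemma rbarWeight_pos (hN : ∀ s s', 0 ≤ N s s')
    (hZ : ∀ s, Z s = ∑ s', Real.exp (α * V s') * N s s') {s s' : S} (h : 0 < N s s') :
    0 < rbarWeight N V α Z s s' := by
  refine mul_pos h (div_pos (Real.exp_pos _) ?_)
  rw [hZ s]
  exact (mul_pos (Real.exp_pos _) h).trans_le (Finset.single_le_sum
    (fun t _ => mul_nonneg (Real.exp_pos _).le (hN s t)) (Finset.mem_univ s'))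

lemma RbarSto_eq (π : S → A → ℝ) : RbarSto d N V α Z M π =
    ∑ s, (d s : EReal) * ∑ s', (rbarWeight N V α Z s s' : EReal) * elog (transition M π s s') :=
  rfl

lemma RbarSto_eq_coe {π : S → A → ℝ} (hd : ∀ s, 0 ≤ d s)
    (hw : ∀ s s', 0 ≤ rbarWeight N V α Z s s')
    (hπ : ∀ s s', 0 < d s → 0 < rbarWeight N V α Z s s' → 0 < transition M π s s') :
    RbarSto d N V α Z M π = ((∑ s, d s * ∑ s', rbarWeight N V α Z s s' *
      Real.log (transition M π s s') : ℝ) : EReal) := by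
  rw [RbarSto_eq, EReal.coe_finset_sum_s16]
  refine Finset.sum_congr rfl fun s _ => ?_
  rcases (hd s).eq_or_lt with hs | hs
  · simp [← hs]
  · rw [sum_coe_mul_elog _ _ _ fun s' _ hw' => hπ s s' hs ((hw s s').lt_of_ne' hw'),
      EReal.coe_mul]

lemma transition_pos_of_RbarSto_ne_bot {π : S → A → ℝ} (hM : ∀ s a s', 0 ≤ M s a s')
    (hπ : ∀ s a, 0 ≤ π s a) (hR : RbarSto d N V α Z M π ≠ ⊥) (s s' : S) (hs : 0 < d s)
    (hw : 0 < rbarWeight N V α Z s s') : 0 < transition M π s s' := by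
  refine (transition_nonneg hM hπ s s').lt_of_ne' fun h0 => hR ?_
  rw [RbarSto_eq]
  refine EReal.finset_sum_eq_bot (Finset.mem_univ s) ?_
  rw [EReal.finset_sum_eq_bot (Finset.mem_univ s') (by
    rw [h0, elog_zero, EReal.coe_mul_bot_of_pos hw]), EReal.coe_mul_bot_of_pos hs]

lemma RbarSto_lt_RbarSto {π π' : S → A → ℝ} (hd : ∀ s, 0 ≤ d s)
    (hw : ∀ s s', 0 ≤ rbarWeight N V α Z s s')
    (hπ : ∀ s s', 0 < d s → 0 < rbarWeight N V α Z s s' → 0 < transition M π s s')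
    (hle : ∀ s s', transition M π s s' ≤ transition M π' s s') {s₀ s₁ : S} (hd₀ : 0 < d s₀)
    (hw₁ : 0 < rbarWeight N V α Z s₀ s₁) (hlt : transition M π s₀ s₁ < transition M π' s₀ s₁) :
    RbarSto d N V α Z M π < RbarSto d N V α Z M π' := by
  have hπ' : ∀ s s', 0 < d s → 0 < rbarWeight N V α Z s s' → 0 < transition M π' s s' :=
    fun s s' hs hw' => (hπ s s' hs hw').trans_le (hle s s')
  rw [RbarSto_eq_coe hd hw hπ, RbarSto_eq_coe hd hw hπ', EReal.coe_lt_coe_iff]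
  exact sum_mul_sum_mul_log_lt hd hw hπ hle hd₀ hw₁ hlt

end RbarSto

theorem stmt16_general {S A : Type*} [Fintype S] [Fintype A]
    (d : S → ℝ) (hd0 : ∀ s, 0 ≤ d s)
    (β : S → A → ℝ) (hβ0 : ∀ s a, 0 ≤ β s a) (hβ1 : ∀ s, ∑ a, β s a = 1)
    (M : S → A → S → ℝ) (hM0 : ∀ s a s', 0 ≤ M s a s')
    (hMzero : ∀ s a, β s a = 0 → ∀ s', M s a s' = 0)
    (hMpmf : ∀ s a, 0 < β s a → ∑ s', M s a s' = 1)
    (N : S → S → ℝ) (hN : ∀ s s', N s s' = ∑ a, β s a * M s a s')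
    (V : S → ℝ) (α : ℝ)
    (Z : S → ℝ) (hZ : ∀ s, Z s = ∑ s', Real.exp (α * V s') * N s s')
    (πst : S → A → ℝ) (hπst0 : ∀ s a, 0 ≤ πst s a) (hπst1 : ∀ s, ∑ a, πst s a = 1)
    (hmax : ∀ π : S → A → ℝ, (∀ s a, 0 ≤ π s a) → (∀ s, ∑ a, π s a = 1) →
      RbarSto d N V α Z M π ≤ RbarSto d N V α Z M πst) :
    ∀ s, 0 < d s → ∀ a, 0 < πst s a → 0 < β s a := by
  intro s₀ hd₀ a₀ hπa₀
  by_contra hβa₀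
  replace hβa₀ : β s₀ a₀ = 0 := le_antisymm (not_lt.1 hβa₀) (hβ0 s₀ a₀)
  have hN_eq : ∀ s s', N s s' = transition M β s s' := fun s s' =>
    (hN s s').trans (Finset.sum_congr rfl fun a _ => mul_comm _ _)
  have hN0 : ∀ s s', 0 ≤ N s s' := fun s s' => hN_eq s s' ▸ transition_nonneg hM0 hβ0 s s'
  have hZ0 : ∀ s, 0 ≤ Z s := fun s =>
    hZ s ▸ Finset.sum_nonneg fun s' _ => mul_nonneg (Real.exp_pos _).le (hN0 s s')
  have hw := rbarWeight_nonneg (V := V) (α := α) hN0 hZ0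
  obtain ⟨b₀, hb₀⟩ := exists_pos_of_sum_eq_one (hβ0 s₀) (hβ1 s₀)
  obtain ⟨s₁, hs₁⟩ := exists_pos_of_sum_eq_one (hM0 s₀ b₀) (hMpmf s₀ b₀ hb₀)
  have hN₁ : 0 < N s₀ s₁ := hN s₀ s₁ ▸ (mul_pos hb₀ hs₁).trans_le (Finset.single_le_sum
    (fun a _ => mul_nonneg (hβ0 s₀ a) (hM0 s₀ a s₁)) (Finset.mem_univ b₀))
  have hβ_ne_bot : RbarSto d N V α Z M β ≠ ⊥ := by
    rw [RbarSto_eq_coe hd0 hw fun s s' _ hw' => hN_eq s s' ▸ pos_of_rbarWeight_pos hZ0 hw']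
    exact EReal.coe_ne_bot _
  have hπst_supp := transition_pos_of_RbarSto_ne_bot hM0 hπst0
    (ne_bot_of_le_ne_bot hβ_ne_bot (hmax β hβ0 hβ1))
  have hMa₀ := hMzero s₀ a₀ hβa₀
  have hab : a₀ ≠ b₀ := fun h => hb₀.ne' (h ▸ hβa₀)
  have hbetter := RbarSto_lt_RbarSto hd0 hw hπst_supp
    (transition_le_update_transferMass hM0 hπst0 hMa₀) hd₀ (rbarWeight_pos hN0 hZ hN₁)
    (transition_lt_update_transferMass hMa₀ hπa₀ hs₁)
  refine hbetter.not_ge (hmax _ (update_transferMass_nonneg hπst0 hab) fun s => ?_)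
  rw [sum_update_transferMass, hπst1]

/-- in the stochastic tabular setting, any policy maximizing `R̄` over all
policies is constrained within the support of the behavior policy at every state in the
support of `d`. -/
theorem stmt16 {S A : Type*} [Fintype S] [Fintype A] [Nonempty S] [Nonempty A]
    (d : S → ℝ) (hd0 : ∀ s, 0 ≤ d s) (hd1 : ∑ s, d s = 1)
    (β : S → A → ℝ) (hβ0 : ∀ s a, 0 ≤ β s a) (hβ1 : ∀ s, ∑ a, β s a = 1)
    (M : S → A → S → ℝ) (hM0 : ∀ s a s', 0 ≤ M s a s')
    (hMzero : ∀ s a, β s a = 0 → ∀ s', M s a s' = 0)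
    (hMpmf : ∀ s a, 0 < β s a → ∑ s', M s a s' = 1)
    (N : S → S → ℝ) (hN : ∀ s s', N s s' = ∑ a, β s a * M s a s')
    (V : S → ℝ) (α : ℝ)
    (Z : S → ℝ) (hZ : ∀ s, Z s = ∑ s', Real.exp (α * V s') * N s s')
    (πst : S → A → ℝ) (hπst0 : ∀ s a, 0 ≤ πst s a) (hπst1 : ∀ s, ∑ a, πst s a = 1)
    (hmax : ∀ π : S → A → ℝ, (∀ s a, 0 ≤ π s a) → (∀ s, ∑ a, π s a = 1) →
      RbarSto d N V α Z M π ≤ RbarSto d N V α Z M πst) :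
    ∀ s, 0 < d s → ∀ a, 0 < πst s a → 0 < β s a :=
  stmt16_general d hd0 β hβ0 hβ1 M hM0 hMzero hMpmf N hN V α Z hZ πst hπst0 hπst1 hmax
end

section
/- In the stochastic tabular setting, if a policy π₁* maximizes R̄₁ over all policies (i.e., R̄₁(π) ≤ R̄₁(π₁*) for every policy π), then π₁* is constrained within the support of the behavior policy at every state in the support of d: for every s with d(s) > 0 and every action a, π₁*(a|s) > 0 implies β(a|s) > 0. -/
/-!
Suppose `d s₀ > 0` and `π*(a₀|s₀) > 0` but `β(a₀|s₀) = 0`, so that `M(·|s₀,a₀) = 0`: the mass that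
`π*` puts on `a₀` is invisible to the regularizer. Since `R̄₁(β)` is finite, so is `R̄₁(π*)`, which
forces `Σ_a M(s'|s₀,a) π*(a|s₀) > 0` wherever `N(s'|s₀) > 0`. Moving the mass of `a₀` onto
`β(·|s₀)` adds `π*(a₀|s₀) · N(s'|s₀)` to every logarithm's argument at `s₀`; as `N(·|s₀)` is a pmf,
one of them grows strictly, so the finite term of `s₀` grows strictly while the other states'
terms are unchanged, contradicting maximality.
-/

open scoped BigOperators Classical

namespace EReal

variable {ι : Type*} {s : Finset ι} {f g : ι → EReal}

lemma sum_eq_bot_iff : ∑ i ∈ s, f i = ⊥ ↔ ∃ i ∈ s, f i = ⊥ :=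
  WithBot.sum_eq_bot_iff

lemma sum_ne_top (h : ∀ i ∈ s, f i ≠ ⊤) : ∑ i ∈ s, f i ≠ ⊤ :=
  Finset.sum_induction f (· ≠ ⊤) (fun _ _ => add_ne_top) (by simp) h

lemma sum_lt_sum (hf : ∀ i ∈ s, f i ≠ ⊥) (hg : ∀ i ∈ s, g i ≠ ⊤) (hle : ∀ i ∈ s, f i ≤ g i)
    {j : ι} (hj : j ∈ s) (hlt : f j < g j) : ∑ i ∈ s, f i < ∑ i ∈ s, g i := by
  rw [← Finset.add_sum_erase s f hj, ← Finset.add_sum_erase s g hj]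
  refine add_lt_add_of_lt_of_le hlt
    (Finset.sum_le_sum fun i hi => hle i (Finset.mem_of_mem_erase hi)) ?_ ?_
  · rw [Ne, sum_eq_bot_iff]
    rintro ⟨i, hi, hfi⟩
    exact hf i (Finset.mem_of_mem_erase hi) hfi
  · exact sum_ne_top fun i hi => hg i (Finset.mem_of_mem_erase hi)

lemma coe_mul_eq_bot_iff {c : ℝ} (hc : 0 ≤ c) {x : EReal} :
    (c : EReal) * x = ⊥ ↔ 0 < c ∧ x = ⊥ := by
  rw [mul_eq_bot]
  simp [hc.not_gt]

lemma coe_mul_ne_top {c : ℝ} (hc : 0 ≤ c) {x : EReal} (hx : x ≠ ⊤) : (c : EReal) * x ≠ ⊤ := by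
  rw [mul_ne_top]
  simp [hc, hx]

lemma coe_mul_lt_coe_mul {c : ℝ} (hc : 0 < c) {x y : EReal} (h : x < y) :
    (c : EReal) * x < c * y := by
  induction x using EReal.rec <;> induction y using EReal.rec
  all_goals simp_all [coe_mul_bot_of_pos, coe_mul_top_of_pos, ← coe_mul]

lemma sum_coe_mul_eq_bot_iff {d : ι → ℝ} (hd : ∀ i ∈ s, 0 ≤ d i) :
    ∑ i ∈ s, (d i : EReal) * f i = ⊥ ↔ ∃ i ∈ s, 0 < d i ∧ f i = ⊥ := by
  rw [sum_eq_bot_iff]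
  exact exists_congr fun i => and_congr_right fun hi => coe_mul_eq_bot_iff (hd i hi)

end EReal

lemma elog_ne_top (x : ℝ) : elog x ≠ ⊤ := by
  unfold elog; split_ifs <;> simp

lemma elog_eq_bot_iff {x : ℝ} : elog x = ⊥ ↔ x = 0 := by
  unfold elog; split_ifs <;> simp [*]

lemma elog_lt_elog {x y : ℝ} (hx : 0 ≤ x) (h : x < y) : elog x < elog y := by
  have hy : y ≠ 0 := (hx.trans_lt h).ne'
  rcases hx.eq_or_lt with rfl | hx
  · simp [elog, hy]
  · simp [elog, hx.ne', hy, Real.log_lt_log hx h]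

section weightedElog

variable {ι : Type*} [Fintype ι] {w x y : ι → ℝ}

noncomputable def weightedElog (w x : ι → ℝ) : EReal :=
  ∑ i, (w i : EReal) * elog (x i)

lemma weightedElog_eq_bot_iff (hw : ∀ i, 0 ≤ w i) :
    weightedElog w x = ⊥ ↔ ∃ i, 0 < w i ∧ x i = 0 := by
  simp [weightedElog, EReal.sum_coe_mul_eq_bot_iff fun i _ => hw i, elog_eq_bot_iff]

lemma weightedElog_ne_top (hw : ∀ i, 0 ≤ w i) : weightedElog w x ≠ ⊤ :=
  EReal.sum_ne_top fun i _ => EReal.coe_mul_ne_top (hw i) (elog_ne_top _)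

lemma weightedElog_lt_weightedElog (hw : ∀ i, 0 ≤ w i) (hx : ∀ i, 0 ≤ x i)
    (hxy : ∀ i, x i ≤ y i) (hne : weightedElog w x ≠ ⊥) {j : ι} (hj : 0 < w j)
    (hlt : x j < y j) : weightedElog w x < weightedElog w y :=
  EReal.sum_lt_sum (fun i _ h => hne (EReal.sum_eq_bot_iff.2 ⟨i, Finset.mem_univ _, h⟩))
    (fun i _ => EReal.coe_mul_ne_top (hw i) (elog_ne_top _))
    (fun i _ => mul_le_mul_of_nonneg_left (elog_le_elog (hx i) (hxy i))
      (EReal.coe_nonneg.2 (hw i)))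
    (Finset.mem_univ j) (EReal.coe_mul_lt_coe_mul hj (elog_lt_elog (hx j) hlt))

end weightedElog

section Regularizer

variable {S A : Type*} [Fintype S] [Fintype A] {d : S → ℝ} {N : S → S → ℝ} {V : S → ℝ} {α : ℝ}
  {M : S → A → S → ℝ} {π : S → A → ℝ}

noncomputable def Rbar1StoAt (N : S → S → ℝ) (V : S → ℝ) (α : ℝ) (M : S → A → S → ℝ) (s : S)
    (q : A → ℝ) : EReal :=
  weightedElog (fun s' => N s s' * Real.exp (α * (V s' - V s))) (fun s' => ∑ a, M s a s' * q a)

lemma Rbar1Sto_eq_sum_Rbar1StoAt :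
    Rbar1Sto d N V α M π = ∑ s, (d s : EReal) * Rbar1StoAt N V α M s (π s) :=
  rfl

lemma Rbar1StoAt_ne_top (hN : ∀ s s', 0 ≤ N s s') (s : S) (q : A → ℝ) :
    Rbar1StoAt N V α M s q ≠ ⊤ :=
  weightedElog_ne_top fun s' => mul_nonneg (hN s s') (Real.exp_pos _).le

lemma Rbar1Sto_eq_bot_iff (hd : ∀ s, 0 ≤ d s) (hN : ∀ s s', 0 ≤ N s s') :
    Rbar1Sto d N V α M π = ⊥ ↔ ∃ s s', 0 < d s ∧ 0 < N s s' ∧ ∑ a, M s a s' * π s a = 0 := by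
  simp [Rbar1Sto_eq_sum_Rbar1StoAt, EReal.sum_coe_mul_eq_bot_iff fun s _ => hd s, Rbar1StoAt,
    weightedElog_eq_bot_iff fun s' => mul_nonneg (hN _ s') (Real.exp_pos _).le,
    mul_pos_iff_of_pos_right (Real.exp_pos _)]

lemma Rbar1StoAt_ne_bot (hd : ∀ s, 0 ≤ d s) (hne : Rbar1Sto d N V α M π ≠ ⊥) {s : S}
    (hs : 0 < d s) : Rbar1StoAt N V α M s (π s) ≠ ⊥ := fun h =>
  hne ((EReal.sum_coe_mul_eq_bot_iff fun s _ => hd s).2 ⟨s, Finset.mem_univ s, hs, h⟩)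

lemma Rbar1Sto_ne_bot_of_eq_sum (hd : ∀ s, 0 ≤ d s) (hN : ∀ s s', 0 ≤ N s s')
    (hπ : ∀ s s', ∑ a, M s a s' * π s a = N s s') : Rbar1Sto d N V α M π ≠ ⊥ := by
  rw [Ne, Rbar1Sto_eq_bot_iff hd hN]
  rintro ⟨s, s', -, hpos, hzero⟩
  exact hpos.ne' (hπ s s' ▸ hzero)

lemma Rbar1StoAt_lt_of_eq_add (hN : ∀ s s', 0 ≤ N s s') {s s₁ : S} (hs₁ : 0 < N s s₁)
    {q q' : A → ℝ} (hq : ∀ s', 0 ≤ ∑ a, M s a s' * q a) (hne : Rbar1StoAt N V α M s q ≠ ⊥)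
    {c : ℝ} (hc : 0 < c) (hq' : ∀ s', ∑ a, M s a s' * q' a = ∑ a, M s a s' * q a + c * N s s') :
    Rbar1StoAt N V α M s q < Rbar1StoAt N V α M s q' :=
  weightedElog_lt_weightedElog (fun s' => mul_nonneg (hN s s') (Real.exp_pos _).le) hq
    (fun s' => (le_add_of_nonneg_right (mul_nonneg hc.le (hN s s'))).trans_eq (hq' s').symm)
    hne (mul_pos hs₁ (Real.exp_pos _))
    ((lt_add_of_pos_right _ (mul_pos hc hs₁)).trans_eq (hq' s₁).symm)

lemma Rbar1Sto_lt_update (hd : ∀ s, 0 ≤ d s) (hN : ∀ s s', 0 ≤ N s s')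
    (hne : Rbar1Sto d N V α M π ≠ ⊥) {s₀ : S} (hs₀ : 0 < d s₀) {q : A → ℝ}
    (hlt : Rbar1StoAt N V α M s₀ (π s₀) < Rbar1StoAt N V α M s₀ q) :
    Rbar1Sto d N V α M π < Rbar1Sto d N V α M (Function.update π s₀ q) := by
  have hlt₀ := EReal.coe_mul_lt_coe_mul hs₀ hlt
  simp only [Rbar1Sto_eq_sum_Rbar1StoAt] at hne ⊢
  refine EReal.sum_lt_sum (fun s _ h => hne (EReal.sum_eq_bot_iff.2 ⟨s, Finset.mem_univ _, h⟩))
    (fun s _ => EReal.coe_mul_ne_top (hd s) (Rbar1StoAt_ne_top hN _ _)) (fun s _ => ?_)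
    (Finset.mem_univ s₀) (by simpa using hlt₀)
  rcases eq_or_ne s s₀ with rfl | hs
  · simpa using hlt₀.le
  · simp [hs]

end Regularizer

section Redistribute

variable {A : Type*} {q b m : A → ℝ} {a₀ : A}

noncomputable def redistribute (q b : A → ℝ) (a₀ : A) : A → ℝ :=
  Function.update (q + q a₀ • b) a₀ 0

lemma redistribute_nonneg (hq : ∀ a, 0 ≤ q a) (hb : ∀ a, 0 ≤ b a) (a : A) :
    0 ≤ redistribute q b a₀ a := by
  rcases eq_or_ne a a₀ with rfl | ha
  · simp [redistribute]
  · simp only [redistribute, Function.update_of_ne ha]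
    exact add_nonneg (hq a) (mul_nonneg (hq a₀) (hb a))

lemma sum_redistribute [Fintype A] (hb : ∑ a, b a = 1) (hb₀ : b a₀ = 0) :
    ∑ a, redistribute q b a₀ a = ∑ a, q a := by
  simp [redistribute, Finset.sum_update_of_mem, Finset.sum_add_distrib, ← Finset.mul_sum, hb, hb₀]

lemma sum_mul_redistribute [Fintype A] (hm : m a₀ = 0) :
    ∑ a, m a * redistribute q b a₀ a = ∑ a, m a * q a + q a₀ * ∑ a, m a * b a := by
  have h : ∀ a, m a * redistribute q b a₀ a = m a * q a + q a₀ * (m a * b a) := by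
    intro a
    rcases eq_or_ne a a₀ with rfl | ha
    · simp [redistribute, hm]
    · simp only [redistribute, Function.update_of_ne ha, Pi.add_apply, Pi.smul_apply, smul_eq_mul]
      ring
  simp [h, Finset.sum_add_distrib, Finset.mul_sum]

end Redistribute

lemma sum_sum_mul_eq_one {A S : Type*} [Fintype A] [Fintype S] {β : A → ℝ} {M : A → S → ℝ}
    (hβ : ∑ a, β a = 1) (hM : ∀ a, 0 < β a → ∑ s, M a s = 1) (hβ0 : ∀ a, 0 ≤ β a) :
    ∑ s, ∑ a, β a * M a s = 1 := by
  rw [Finset.sum_comm, ← hβ]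
  refine Finset.sum_congr rfl fun a _ => ?_
  rcases (hβ0 a).eq_or_lt with h | h
  · simp [← h]
  · rw [← Finset.mul_sum, hM a h, mul_one]

theorem stmt17_general {S A : Type*} [Fintype S] [Fintype A]
    (d : S → ℝ) (hd0 : ∀ s, 0 ≤ d s)
    (β : S → A → ℝ) (hβ0 : ∀ s a, 0 ≤ β s a) (hβ1 : ∀ s, ∑ a, β s a = 1)
    (M : S → A → S → ℝ) (hM0 : ∀ s a s', 0 ≤ M s a s')
    (hMzero : ∀ s a, β s a = 0 → ∀ s', M s a s' = 0)
    (hMpmf : ∀ s a, 0 < β s a → ∑ s', M s a s' = 1)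
    (N : S → S → ℝ) (hN : ∀ s s', N s s' = ∑ a, β s a * M s a s')
    (V : S → ℝ) (α : ℝ)
    (πst : S → A → ℝ) (hπst0 : ∀ s a, 0 ≤ πst s a) (hπst1 : ∀ s, ∑ a, πst s a = 1)
    (hmax : ∀ π : S → A → ℝ, (∀ s a, 0 ≤ π s a) → (∀ s, ∑ a, π s a = 1) →
      Rbar1Sto d N V α M π ≤ Rbar1Sto d N V α M πst) :
    ∀ s, 0 < d s → ∀ a, 0 < πst s a → 0 < β s a := by
  intro s₀ hds₀ a₀ hπa₀
  by_contra hβa₀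
  replace hβa₀ : β s₀ a₀ = 0 := le_antisymm (not_lt.1 hβa₀) (hβ0 s₀ a₀)
  have hN0 : ∀ s s', 0 ≤ N s s' := fun s s' =>
    (hN s s').symm ▸ Finset.sum_nonneg fun a _ => mul_nonneg (hβ0 s a) (hM0 s a s')
  have hNβ : ∀ s s', ∑ a, M s a s' * β s a = N s s' := fun s s' => by simp [hN, mul_comm]
  have hne : Rbar1Sto d N V α M πst ≠ ⊥ :=
    ne_bot_of_le_ne_bot (Rbar1Sto_ne_bot_of_eq_sum hd0 hN0 hNβ) (hmax β hβ0 hβ1)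
  have hN1 : ∑ s', N s₀ s' = 1 := by
    simpa only [hN] using sum_sum_mul_eq_one (hβ1 s₀) (hMpmf s₀) (hβ0 s₀)
  obtain ⟨s₁, -, hs₁⟩ := Finset.exists_lt_of_sum_lt (s := Finset.univ) (f := 0) (g := N s₀)
    (by simp [hN1])
  set q := redistribute (πst s₀) (β s₀) a₀
  have hq : ∀ s', ∑ a, M s₀ a s' * q a = ∑ a, M s₀ a s' * πst s₀ a + πst s₀ a₀ * N s₀ s' :=
    fun s' => by rw [sum_mul_redistribute (m := fun a => M s₀ a s') (hMzero s₀ a₀ hβa₀ s'), hNβ]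
  have hlt : Rbar1StoAt N V α M s₀ (πst s₀) < Rbar1StoAt N V α M s₀ q :=
    Rbar1StoAt_lt_of_eq_add hN0 hs₁
      (fun s' => Finset.sum_nonneg fun a _ => mul_nonneg (hM0 s₀ a s') (hπst0 s₀ a))
      (Rbar1StoAt_ne_bot hd0 hne hds₀) hπa₀ hq
  refine (hmax _ ?_ ?_).not_gt (Rbar1Sto_lt_update hd0 hN0 hne hds₀ hlt)
  · exact (Function.forall_update_iff πst fun _ p => ∀ a, 0 ≤ p a).2
      ⟨redistribute_nonneg (hπst0 s₀) (hβ0 s₀), fun s _ => hπst0 s⟩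
  · exact (Function.forall_update_iff πst fun _ p => ∑ a, p a = 1).2
      ⟨(sum_redistribute (hβ1 s₀) hβa₀).trans (hπst1 s₀), fun s _ => hπst1 s⟩

/-- in the stochastic tabular setting, any policy maximizing `R̄₁` over all
policies is constrained within the support of the behavior policy at every state in the
support of `d`. -/
theorem stmt17 {S A : Type*} [Fintype S] [Fintype A] [Nonempty S] [Nonempty A]
    (d : S → ℝ) (hd0 : ∀ s, 0 ≤ d s) (hd1 : ∑ s, d s = 1)
    (β : S → A → ℝ) (hβ0 : ∀ s a, 0 ≤ β s a) (hβ1 : ∀ s, ∑ a, β s a = 1)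
    (M : S → A → S → ℝ) (hM0 : ∀ s a s', 0 ≤ M s a s')
    (hMzero : ∀ s a, β s a = 0 → ∀ s', M s a s' = 0)
    (hMpmf : ∀ s a, 0 < β s a → ∑ s', M s a s' = 1)
    (N : S → S → ℝ) (hN : ∀ s s', N s s' = ∑ a, β s a * M s a s')
    (V : S → ℝ) (α : ℝ)
    (πst : S → A → ℝ) (hπst0 : ∀ s a, 0 ≤ πst s a) (hπst1 : ∀ s, ∑ a, πst s a = 1)
    (hmax : ∀ π : S → A → ℝ, (∀ s a, 0 ≤ π s a) → (∀ s, ∑ a, π s a = 1) →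
      Rbar1Sto d N V α M π ≤ Rbar1Sto d N V α M πst) :
    ∀ s, 0 < d s → ∀ a, 0 < πst s a → 0 < β s a :=
  stmt17_general d hd0 β hβ0 hβ1 M hM0 hMzero hMpmf N hN V α πst hπst0 hπst1 hmax
end
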